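/- Let Q be the equioriented A_n quiver. Two finite-dimensional representations M and N of Q are isomorphic if and only if their rank sequences coincide: r^M_{i,j} = r^N_{i,j} for all 1 ≤ i ≤ j ≤ n. -/

import Mathlib

/-!
The isomorphism `e_m : V m ≃ W m` is built vertex by vertex, keeping the invariant that `e_m`
carries the kernel flag `k ↦ ker (f_{m+k-1} ∘ ⋯ ∘ f_m)` of `V m` onto that of `W m`.
Since `f_m⁻¹ (ker (f_{m+k} ∘ ⋯ ∘ f_{m+1})) = ker (f_{m+k} ∘ ⋯ ∘ f_m)`, the invariant at `m`
says that `f_m` and `g_m ∘ e_m` pull the two kernel flags at `m + 1` back to the same subspaces,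
and by rank–nullity the rank sequence gives corresponding flag members equal dimensions; the
flags reach the whole space because the representations vanish beyond `n`. Linear algebra then
yields `e_{m+1}` with `e_{m+1} ∘ f_m = g_m ∘ e_m` carrying flag onto flag. This extension is
built one flag member at a time, adding to the map being matched the inclusion of the members
already treated.
-/

open Module

section

variable (V : ℕ → Type) [∀ m, AddCommGroup (V m)] [∀ m, Module ℂ (V m)]
  [∀ m, FiniteDimensional ℂ (V m)]

/-- The composite `f_{i+k-1} ∘ ⋯ ∘ f_i : V i → V (i+k)` of the structure maps. -/
def chainComp (f : ∀ m, V m →ₗ[ℂ] V (m + 1)) : ∀ (i k : ℕ), V i →ₗ[ℂ] V (i + k)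
  | _, 0 => LinearMap.id
  | i, k + 1 => (f (i + k)).comp (chainComp f i k)

/-- The rank sequence `r^M_{i,j} = rank (f_{j−1} ∘ ⋯ ∘ f_i)` (with `r_{i,i} = dim M_i`). -/
noncomputable def rkSeq (f : ∀ m, V m →ₗ[ℂ] V (m + 1)) (i j : ℕ) : ℕ :=
  Module.finrank ℂ (LinearMap.range (chainComp V f i (j - i)))

open LinearMap Submodule

section LinearAlgebra

variable {K X Y Z : Type*} [DivisionRing K] [AddCommGroup X] [Module K X] [AddCommGroup Y]
  [Module K Y] [AddCommGroup Z] [Module K Z] [FiniteDimensional K X] [FiniteDimensional K Y]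

theorem LinearMap.exists_linearEquiv_comp_eq_of_ker_eq (F : Z →ₗ[K] X) (Ψ : Z →ₗ[K] Y)
    (hker : ker F = ker Ψ) (hdim : finrank K X = finrank K Y) :
    ∃ e : X ≃ₗ[K] Y, e.toLinearMap ∘ₗ F = Ψ := by
  obtain ⟨e₀⟩ := FiniteDimensional.nonempty_linearEquiv_of_finrank_eq hdim
  set G := e₀.toLinearMap ∘ₗ F
  have hker' : ker G = ker Ψ := by rw [LinearEquiv.ker_comp, hker]
  let φ : range G ≃ₗ[K] range Ψ :=
    G.quotKerEquivRange.symm ≪≫ₗ quotEquivOfEq _ _ hker' ≪≫ₗ Ψ.quotKerEquivRange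
  obtain ⟨τ, hτ⟩ := Submodule.exists_linearEquiv_restrict_eq φ
  refine ⟨e₀ ≪≫ₗ τ, LinearMap.ext fun z => ?_⟩
  have hz := hτ ⟨G z, mem_range_self G z⟩
  simp only [φ, LinearEquiv.trans_apply, quotKerEquivRange_symm_apply_image] at hz
  simpa [G] using hz.symm

theorem LinearMap.exists_linearEquiv_comp_eq_map_eq (F : Z →ₗ[K] X) (Ψ : Z →ₗ[K] Y)
    (P : Submodule K X) (P' : Submodule K Y) (hker : ker F = ker Ψ)
    (hcomap : P.comap F = P'.comap Ψ) (hdimP : finrank K P = finrank K P')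
    (hdim : finrank K X = finrank K Y) :
    ∃ e : X ≃ₗ[K] Y, e.toLinearMap ∘ₗ F = Ψ ∧ P.map e.toLinearMap = P' := by
  obtain ⟨σ, hσ⟩ := exists_linearEquiv_comp_eq_of_ker_eq
    (F.restrict (p := P.comap F) (q := P) fun _ hz => hz)
    (Ψ.restrict (p := P.comap F) (q := P') fun z hz => (hcomap ▸ hz : z ∈ P'.comap Ψ))
    (by
      ext z
      simp only [mem_ker, restrict_apply, Subtype.ext_iff, ZeroMemClass.coe_zero]
      rw [← mem_ker, hker, mem_ker]) hdimP
  have hσF : ∀ z (hz : z ∈ P.comap F), (σ ⟨F z, hz⟩ : Y) = Ψ z := fun z hz =>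
    congrArg Subtype.val (LinearMap.congr_fun hσ ⟨z, hz⟩)
  -- `(z, p)` lies in either kernel only if `F z ∈ P`, and there `σ` matches `F z` with `Ψ z`.
  have hker' : ker (F.coprod P.subtype) = ker (Ψ.coprod (P'.subtype ∘ₗ σ.toLinearMap)) := by
    ext ⟨z, p⟩
    simp only [mem_ker, coprod_apply, Submodule.subtype_apply, LinearMap.comp_apply,
      LinearEquiv.coe_coe]
    constructor
    · intro h
      have hz : z ∈ P.comap F := by
        simp [eq_neg_of_add_eq_zero_left h]
      have hp : p = -⟨F z, hz⟩ := Subtype.ext (eq_neg_of_add_eq_zero_right h)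
      rw [hp, map_neg, NegMemClass.coe_neg, hσF, add_neg_cancel]
    · intro h
      have hz : z ∈ P.comap F := by
        rw [hcomap]
        simp [eq_neg_of_add_eq_zero_left h]
      have hp : σ p = σ (-⟨F z, hz⟩) := Subtype.ext <| by
        rw [map_neg, NegMemClass.coe_neg, hσF]
        exact eq_neg_of_add_eq_zero_right h
      rw [σ.injective hp, NegMemClass.coe_neg, add_neg_cancel]
  obtain ⟨e, he⟩ := exists_linearEquiv_comp_eq_of_ker_eq _ _ hker' hdim
  refine ⟨e, ?_, ?_⟩
  · simpa only [LinearMap.comp_assoc, coprod_inl] using congrArg (· ∘ₗ LinearMap.inl K Z P) he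
  · have hP := congrArg (· ∘ₗ LinearMap.inr K Z P) he
    simp only [LinearMap.comp_assoc, coprod_inr] at hP
    rw [← range_subtype P, ← range_comp, hP, range_comp, LinearEquiv.range, Submodule.map_top,
      range_subtype]

theorem LinearMap.exists_linearEquiv_comp_eq_map_flag_eq (F : Z →ₗ[K] X) (Ψ : Z →ₗ[K] Y)
    (P : ℕ → Submodule K X) (P' : ℕ → Submodule K Y) (hP : Monotone P) (hP' : Monotone P')
    (N : ℕ) (hN : P N = ⊤) (hN' : P' N = ⊤) (hker : ker F = ker Ψ)
    (hcomap : ∀ j, (P j).comap F = (P' j).comap Ψ)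
    (hdimP : ∀ j, finrank K (P j) = finrank K (P' j)) :
    ∃ e : X ≃ₗ[K] Y, e.toLinearMap ∘ₗ F = Ψ ∧ ∀ j, (P j).map e.toLinearMap = P' j := by
  have hdim : finrank K X = finrank K Y := by
    have hdimN := hdimP N
    rwa [hN, hN', finrank_top, finrank_top] at hdimN
  have hupto : ∀ j, ∃ e : X ≃ₗ[K] Y, e.toLinearMap ∘ₗ F = Ψ ∧
      ∀ i ≤ j, (P i).map e.toLinearMap = P' i := by
    intro j
    induction j with
    | zero =>
      obtain ⟨e, hF, h0⟩ :=
        exists_linearEquiv_comp_eq_map_eq F Ψ _ _ hker (hcomap 0) (hdimP 0) hdim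
      exact ⟨e, hF, fun i hi => by rwa [Nat.le_zero.mp hi]⟩
    | succ j ih =>
      obtain ⟨e, hF, hle⟩ := ih
      -- Extending `F` by the inclusion of `P j` forces the new equivalence to agree with `e` there.
      have hker' : ker (F.coprod (P j).subtype) =
          ker (Ψ.coprod (e.toLinearMap ∘ₗ (P j).subtype)) := by
        rw [← hF, ← comp_coprod, LinearEquiv.ker_comp]
      have hcomap' : (P (j + 1)).comap (F.coprod (P j).subtype) =
          (P' (j + 1)).comap (Ψ.coprod (e.toLinearMap ∘ₗ (P j).subtype)) := by
        ext ⟨z, p⟩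
        have hp : e p ∈ P' j := hle j le_rfl ▸ mem_map_of_mem p.2
        simp only [mem_comap, coprod_apply, Submodule.subtype_apply, LinearMap.comp_apply,
          LinearEquiv.coe_coe]
        rw [Submodule.add_mem_iff_left _ (hP j.le_succ p.2),
          Submodule.add_mem_iff_left _ (hP' j.le_succ hp), ← mem_comap, hcomap, mem_comap]
      obtain ⟨e', he', hj⟩ := exists_linearEquiv_comp_eq_map_eq _ _ _ _ hker' hcomap'
        (hdimP (j + 1)) hdim
      have hagree : ∀ x ∈ P j, e' x = e x := fun x hx => by
        simpa using LinearMap.congr_fun he' (0, ⟨x, hx⟩)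
      refine ⟨e', ?_, fun i hi => ?_⟩
      · simpa only [LinearMap.comp_assoc, coprod_inl]
          using congrArg (· ∘ₗ LinearMap.inl K Z (P j)) he'
      · rcases Nat.le_succ_iff.mp hi with hi | rfl
        · rw [← hle i hi]
          refine SetLike.coe_injective ?_
          simp only [map_coe]
          exact Set.image_congr fun x hx => hagree x (hP hi hx)
        · exact hj
  obtain ⟨e, hF, hle⟩ := hupto N
  refine ⟨e, hF, fun j => ?_⟩
  rcases le_total j N with hj | hj
  · exact hle j hj
  · rw [eq_top_iff.mpr (hN ▸ hP hj : ⊤ ≤ P j), eq_top_iff.mpr (hN' ▸ hP' hj : ⊤ ≤ P' j),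
      Submodule.map_top, LinearEquiv.range]

end LinearAlgebra

theorem eq_zero_iff_of_heq {ι : Type*} {A : ι → Type*} [∀ i, Zero (A i)] {p q : ι} (h : p = q)
    {a : A p} {b : A q} (hab : HEq a b) : a = 0 ↔ b = 0 := by
  subst h
  rw [eq_of_heq hab]

section ChainComp

variable {M N : ℕ → Type} [∀ m, AddCommGroup (M m)] [∀ m, Module ℂ (M m)]
  [∀ m, AddCommGroup (N m)] [∀ m, Module ℂ (N m)]
  (f : ∀ m, M m →ₗ[ℂ] M (m + 1)) (g : ∀ m, N m →ₗ[ℂ] N (m + 1))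

theorem heq_apply_of_heq {p q : ℕ} (h : p = q) {a : M p} {b : M q} (hab : HEq a b) :
    HEq (f p a) (f q b) := by
  subst h
  rw [eq_of_heq hab]

theorem chainComp_succ_heq (i k : ℕ) (x : M i) :
    HEq (chainComp M f i (k + 1) x) (chainComp M f (i + 1) k (f i x)) := by
  induction k with
  | zero => rfl
  | succ k ih =>
    exact heq_apply_of_heq f (Nat.succ_add i k).symm ih

theorem ker_chainComp_succ (i k : ℕ) :
    ker (chainComp M f i (k + 1)) = (ker (chainComp M f (i + 1) k)).comap (f i) := by
  ext x
  exact eq_zero_iff_of_heq (Nat.succ_add i k).symm (chainComp_succ_heq f i k x)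

theorem monotone_ker_chainComp (i : ℕ) : Monotone fun k => ker (chainComp M f i k) :=
  monotone_nat_of_le_succ fun k => ker_le_ker_comp (chainComp M f i k) (f (i + k))

theorem equiv_comp_chainComp (e : ∀ m, M m ≃ₗ[ℂ] N m)
    (he : ∀ m, (e (m + 1)).toLinearMap ∘ₗ f m = g m ∘ₗ (e m).toLinearMap) (i k : ℕ) :
    (e (i + k)).toLinearMap ∘ₗ chainComp M f i k = chainComp N g i k ∘ₗ (e i).toLinearMap := by
  induction k with
  | zero => rfl
  | succ k ih =>
    show (e (i + k + 1)).toLinearMap ∘ₗ f (i + k) ∘ₗ chainComp M f i k =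
      g (i + k) ∘ₗ chainComp N g i k ∘ₗ (e i).toLinearMap
    rw [← LinearMap.comp_assoc, he, LinearMap.comp_assoc, ih]

theorem finrank_range_chainComp_eq_of_equiv (e : ∀ m, M m ≃ₗ[ℂ] N m)
    (he : ∀ m, (e (m + 1)).toLinearMap ∘ₗ f m = g m ∘ₗ (e m).toLinearMap) (i k : ℕ) :
    finrank ℂ (range (chainComp M f i k)) = finrank ℂ (range (chainComp N g i k)) := by
  rw [← range_comp_of_range_eq_top _ (e i).range, ← equiv_comp_chainComp f g e he, range_comp,
    LinearEquiv.finrank_map_eq]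

variable [∀ m, FiniteDimensional ℂ (M m)] [∀ m, FiniteDimensional ℂ (N m)]

theorem finrank_ker_chainComp_eq {i : ℕ}
    (hrank : ∀ k, finrank ℂ (range (chainComp M f i k)) = finrank ℂ (range (chainComp N g i k)))
    (k : ℕ) : finrank ℂ (ker (chainComp M f i k)) = finrank ℂ (ker (chainComp N g i k)) := by
  have hdim : finrank ℂ (M i) = finrank ℂ (N i) := by
    have h0 := hrank 0
    rwa [chainComp, chainComp, range_id, range_id, finrank_top, finrank_top] at h0
  have hM := finrank_range_add_finrank_ker (chainComp M f i k)
  have hN := finrank_range_add_finrank_ker (chainComp N g i k)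
  have hk := hrank k
  omega

def MapsKerFlag {i : ℕ} (e : M i ≃ₗ[ℂ] N i) : Prop :=
  ∀ k, (ker (chainComp M f i k)).map e.toLinearMap = ker (chainComp N g i k)

theorem exists_mapsKerFlag_comp_eq {Z : Type*} [AddCommGroup Z] [Module ℂ Z] {i : ℕ}
    (F : Z →ₗ[ℂ] M i) (Ψ : Z →ₗ[ℂ] N i) (hker : ker F = ker Ψ)
    (hcomap : ∀ k, (ker (chainComp M f i k)).comap F = (ker (chainComp N g i k)).comap Ψ)
    (hrank : ∀ k, finrank ℂ (range (chainComp M f i k)) = finrank ℂ (range (chainComp N g i k)))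
    (hnil : ∃ d, chainComp M f i d = 0 ∧ chainComp N g i d = 0) :
    ∃ e : M i ≃ₗ[ℂ] N i, e.toLinearMap ∘ₗ F = Ψ ∧ MapsKerFlag f g e := by
  obtain ⟨d, hfd, hgd⟩ := hnil
  exact exists_linearEquiv_comp_eq_map_flag_eq F Ψ _ _ (monotone_ker_chainComp f i)
    (monotone_ker_chainComp g i) d (ker_eq_top.mpr hfd) (ker_eq_top.mpr hgd) hker hcomap
    (finrank_ker_chainComp_eq f g hrank)

theorem MapsKerFlag.exists_succ {m : ℕ} {e : M m ≃ₗ[ℂ] N m} (he : MapsKerFlag f g e)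
    (hrank : ∀ k, finrank ℂ (range (chainComp M f (m + 1) k)) =
      finrank ℂ (range (chainComp N g (m + 1) k)))
    (hnil : ∃ d, chainComp M f (m + 1) d = 0 ∧ chainComp N g (m + 1) d = 0) :
    ∃ e' : M (m + 1) ≃ₗ[ℂ] N (m + 1),
      e'.toLinearMap ∘ₗ f m = g m ∘ₗ e.toLinearMap ∧ MapsKerFlag f g e' := by
  have hcomap : ∀ k, (ker (chainComp M f (m + 1) k)).comap (f m) =
      (ker (chainComp N g (m + 1) k)).comap (g m ∘ₗ e.toLinearMap) := fun k => by
    rw [← ker_chainComp_succ, comap_comp, ← ker_chainComp_succ, ← he (k + 1),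
      comap_map_eq_of_injective e.injective]
  refine exists_mapsKerFlag_comp_eq f g _ _ ?_ hcomap hrank hnil
  simpa only [chainComp, ker_id, comap_bot] using hcomap 0

theorem exists_equiv_of_finrank_range_chainComp_eq
    (hnil : ∀ i, ∃ d, chainComp M f i d = 0 ∧ chainComp N g i d = 0)
    (hrank : ∀ i k,
      finrank ℂ (range (chainComp M f i k)) = finrank ℂ (range (chainComp N g i k))) :
    ∃ e : ∀ m, M m ≃ₗ[ℂ] N m, ∀ m, (e (m + 1)).toLinearMap ∘ₗ f m = g m ∘ₗ (e m).toLinearMap := by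
  obtain ⟨e₀, -, he₀⟩ := exists_mapsKerFlag_comp_eq f g (0 : M 0 →ₗ[ℂ] M 0) 0
    (by rw [ker_zero, ker_zero]) (fun k => by simp only [comap_zero]) (hrank 0) (hnil 0)
  have step : ∀ m (e : {e : M m ≃ₗ[ℂ] N m // MapsKerFlag f g e}),
      ∃ e' : {e' : M (m + 1) ≃ₗ[ℂ] N (m + 1) // MapsKerFlag f g e'},
        e'.1.toLinearMap ∘ₗ f m = g m ∘ₗ e.1.toLinearMap := fun m e => by
    obtain ⟨e', hcomm, he'⟩ := e.2.exists_succ f g (hrank (m + 1)) (hnil (m + 1))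
    exact ⟨⟨e', he'⟩, hcomm⟩
  choose next hnext using step
  let E : ∀ m, {e : M m ≃ₗ[ℂ] N m // MapsKerFlag f g e} := fun m => Nat.rec ⟨e₀, he₀⟩ next m
  exact ⟨fun m => (E m).1, fun m => hnext m (E m)⟩

end ChainComp

/-- two representations of the equioriented `A_n` quiver (chains
supported on vertices `1,…,n`) are isomorphic iff their rank sequences coincide. -/
theorem iso_iff_rank_sequences_eq (n : ℕ)
    (W : ℕ → Type) [∀ m, AddCommGroup (W m)] [∀ m, Module ℂ (W m)]
    [∀ m, FiniteDimensional ℂ (W m)]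
    (f : ∀ m, V m →ₗ[ℂ] V (m + 1)) (g : ∀ m, W m →ₗ[ℂ] W (m + 1))
    (hV : ∀ m, m = 0 ∨ n < m → Subsingleton (V m))
    (hW : ∀ m, m = 0 ∨ n < m → Subsingleton (W m)) :
    (∃ e : ∀ m, V m ≃ₗ[ℂ] W m,
        ∀ m, ((e (m + 1) : V (m + 1) →ₗ[ℂ] W (m + 1)).comp (f m)) =
          (g m).comp (e m : V m →ₗ[ℂ] W m)) ↔
      (∀ i j : ℕ, 1 ≤ i → i ≤ j → j ≤ n → rkSeq V f i j = rkSeq W g i j) := by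
  constructor
  · rintro ⟨e, he⟩ i j - - -
    exact finrank_range_chainComp_eq_of_equiv f g e he i (j - i)
  · intro hr
    refine exists_equiv_of_finrank_range_chainComp_eq f g (fun i => ⟨n + 1, ?_, ?_⟩) fun i k => ?_
    · have := hV (i + (n + 1)) (Or.inr (by omega))
      exact Subsingleton.elim _ _
    · have := hW (i + (n + 1)) (Or.inr (by omega))
      exact Subsingleton.elim _ _
    by_cases hik : 1 ≤ i ∧ i + k ≤ n
    · have hrk := hr i (i + k) hik.1 (by omega) hik.2
      rwa [rkSeq, rkSeq, Nat.add_sub_cancel_left] at hrk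
    obtain ⟨_, _⟩ : Subsingleton (V i →ₗ[ℂ] V (i + k)) ∧ Subsingleton (W i →ₗ[ℂ] W (i + k)) := by
      rcases (by omega : i = 0 ∨ n < i + k) with h | h
      · have := hV i (Or.inl h)
        have := hW i (Or.inl h)
        exact ⟨inferInstance, inferInstance⟩
      · have := hV (i + k) (Or.inr h)
        have := hW (i + k) (Or.inr h)
        exact ⟨inferInstance, inferInstance⟩
    rw [Subsingleton.elim (chainComp V f i k) 0, Subsingleton.elim (chainComp W g i k) 0,
      range_zero, range_zero, finrank_bot, finrank_bot]

end
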